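/- arXiv:1311.5068 — 2 statements merged into one kernel-verified Lean document; each statement's English description precedes it below -/
import Mathlib

section
/- Single linkage hierarchical clustering is semi-stable in the Gromov–Hausdorff sense: if (X_k,d_k) is a sequence of finite metric spaces and (U,u) is a finite ultrametric space such that d_GH((X_k,d_k),(U,u)) → 0 as k → ∞, then d_GH((X_k,u_SL^{X_k}),(U,u)) → 0, where u_SL^{X_k} is the single-linkage ultrametric of (X_k,d_k). -/
/-- A distance function `d` is a metric. -/
def IsMetric {X : Type*} (d : X → X → ℝ) : Prop :=
  (∀ x y, d x y = d y x) ∧ (∀ x y, d x y = 0 ↔ x = y) ∧ (∀ x y z, d x z ≤ d x y + d y z)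

/-- A distance function is an ultrametric: a metric satisfying the strong triangle
inequality. -/
def IsUltrametricD {X : Type*} (d : X → X → ℝ) : Prop :=
  IsMetric d ∧ ∀ x y z, d x z ≤ max (d x y) (d y z)

/-- The maximum of the consecutive distances along the chain `x :: l ++ [y]`. -/
def chainMax {X : Type*} (d : X → X → ℝ) : X → List X → X → ℝ
  | x, [], y => d x y
  | x, z :: l, y => max (d x z) (chainMax d z l y)

/-- The single-linkage ultrametric: the minimum over all chains from `x` to `y`
of the maximum of the consecutive distances along the chain. -/
noncomputable def uSL {X : Type*} (d : X → X → ℝ) (x y : X) : ℝ :=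
  sInf { r | ∃ l : List X, chainMax d x l y = r }

/-- A correspondence between `X` and `Y`: every point of `X` and every point of `Y`
occurs in some pair. -/
def IsCorr {X Y : Type*} (τ : Set (X × Y)) : Prop :=
  (∀ x, ∃ y, (x, y) ∈ τ) ∧ (∀ y, ∃ x, (x, y) ∈ τ)

/-- The distortion of a correspondence: the supremum of `|d_X(x,x') − d_Y(y,y')|`
over pairs `(x,y), (x',y')` in the correspondence. -/
noncomputable def corrDist {X Y : Type*} (dX : X → X → ℝ) (dY : Y → Y → ℝ)
    (τ : Set (X × Y)) : ℝ :=
  sSup { v | ∃ p ∈ τ, ∃ q ∈ τ, v = |dX p.1 q.1 - dY p.2 q.2| }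

/-- The Gromov–Hausdorff distance: half the infimum over correspondences of their
distortion. -/
noncomputable def ghDist {X Y : Type*} (dX : X → X → ℝ) (dY : Y → Y → ℝ) : ℝ :=
  (1 / 2) * sInf { r | ∃ τ : Set (X × Y), IsCorr τ ∧ corrDist dX dY τ = r }

/-- Single linkage value between two blocks: minimal cross distance. -/
noncomputable def ellSL {X : Type*} (d : X → X → ℝ) (A B : Finset X) : ℝ :=
  sInf { r | ∃ a ∈ A, ∃ b ∈ B, d a b = r }

/-- Complete linkage value between two blocks: maximal cross distance. -/
noncomputable def ellCL {X : Type*} (d : X → X → ℝ) (A B : Finset X) : ℝ :=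
  sSup { r | ∃ a ∈ A, ∃ b ∈ B, d a b = r }

/-- Average linkage value between two blocks: average cross distance. -/
noncomputable def ellAL {X : Type*} (d : X → X → ℝ) (A B : Finset X) : ℝ :=
  (∑ a ∈ A, ∑ b ∈ B, d a b) / (A.card * B.card)

/-- A finite (nonempty) metric space, packaged with carrier `Fin n`. -/
structure FinMetricSpace where
  n : ℕ
  pos : 0 < n
  d : Fin n → Fin n → ℝ
  metric : IsMetric d

/-!
Every correspondence `τ` between `(X, d)` and an ultrametric space `(U, u)` distorts the
single-linkage ultrametric no more than it distorts `d`. Indeed `u_SL ≤ d ≤ u + ε`, and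
conversely, given a chain from `x` to `x'`, pick `τ`-partners in `U` of its points: the strong
triangle inequality bounds `u` between the partners of `x` and `x'` by the largest `u`-step, and
each `u`-step exceeds the corresponding `d`-step by at most `ε`. Hence
`d_GH(u_SL, u) ≤ d_GH(d, u)`, and the theorem follows by squeezing.
-/

variable {X Y : Type*}

lemma IsMetric.nonneg {d : X → X → ℝ} (hd : IsMetric d) (x y : X) : 0 ≤ d x y := by
  have := hd.2.2 x y x
  rw [hd.1 y x, (hd.2.1 x x).2 rfl] at this
  linarith

lemma chainMax_nonneg {d : X → X → ℝ} (hd : IsMetric d) :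
    ∀ (x : X) (l : List X) (y : X), 0 ≤ chainMax d x l y
  | x, [], y => hd.nonneg x y
  | x, z :: _, _ => (hd.nonneg x z).trans (le_max_left _ _)

lemma uSL_le {d : X → X → ℝ} (hd : IsMetric d) (x y : X) : uSL d x y ≤ d x y :=
  csInf_le ⟨0, fun _ ⟨l, hl⟩ => hl ▸ chainMax_nonneg hd x l y⟩ ⟨[], rfl⟩

section StrongTriangle

variable {d : X → X → ℝ} {u : Y → Y → ℝ} {τ : Set (X × Y)} {ε : ℝ}
  (hu : ∀ a b c, u a c ≤ max (u a b) (u b c)) (hcov : ∀ x, ∃ y, (x, y) ∈ τ)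
  (hdis : ∀ p ∈ τ, ∀ q ∈ τ, u p.2 q.2 ≤ d p.1 q.1 + ε)
include hu hcov hdis

lemma le_chainMax_add :
    ∀ (l : List X) (x x' : X) (y y' : Y), (x, y) ∈ τ → (x', y') ∈ τ →
      u y y' ≤ chainMax d x l x' + ε
  | [], _, _, _, _, hxy, hxy' => hdis _ hxy _ hxy'
  | z :: l, x, x', y, y', hxy, hxy' => by
    obtain ⟨w, hzw⟩ := hcov z
    calc u y y' ≤ max (u y w) (u w y') := hu y w y'
      _ ≤ max (d x z + ε) (chainMax d z l x' + ε) :=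
        max_le_max (hdis _ hxy _ hzw) (le_chainMax_add l z x' w y' hzw hxy')
      _ = chainMax d x (z :: l) x' + ε := max_add_add_right _ _ _

lemma le_uSL_add {x x' : X} {y y' : Y} (hxy : (x, y) ∈ τ) (hxy' : (x', y') ∈ τ) :
    u y y' ≤ uSL d x x' + ε := by
  rw [← sub_le_iff_le_add]
  refine le_csInf ⟨_, [], rfl⟩ ?_
  rintro _ ⟨l, rfl⟩
  linarith [le_chainMax_add hu hcov hdis l x x' y y' hxy hxy']

end StrongTriangle

section Distortion

variable {d : X → X → ℝ} {u : Y → Y → ℝ} {τ : Set (X × Y)}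

lemma corrDist_nonneg : 0 ≤ corrDist d u τ :=
  Real.sSup_nonneg fun _ ⟨_, _, _, _, hv⟩ => hv ▸ abs_nonneg _

lemma abs_sub_le_corrDist [Finite X] [Finite Y] {p q : X × Y} (hp : p ∈ τ) (hq : q ∈ τ) :
    |d p.1 q.1 - u p.2 q.2| ≤ corrDist d u τ := by
  refine le_csSup (Set.Finite.bddAbove ?_) ⟨p, hp, q, hq, rfl⟩
  refine (Set.finite_range fun pq : (X × Y) × (X × Y) =>
    |d pq.1.1 pq.2.1 - u pq.1.2 pq.2.2|).subset ?_
  rintro _ ⟨p, -, q, -, rfl⟩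
  exact ⟨(p, q), rfl⟩

lemma corrDist_uSL_le [Finite X] [Finite Y] (hd : IsMetric d)
    (hu : ∀ a b c, u a c ≤ max (u a b) (u b c)) (hτ : IsCorr τ) :
    corrDist (uSL d) u τ ≤ corrDist d u τ := by
  have hdis {p q : X × Y} (hp : p ∈ τ) (hq : q ∈ τ) :=
    abs_le.1 (abs_sub_le_corrDist (d := d) (u := u) hp hq)
  refine Real.sSup_le ?_ corrDist_nonneg
  rintro _ ⟨p, hp, q, hq, rfl⟩
  have hlow : u p.2 q.2 ≤ uSL d p.1 q.1 + corrDist d u τ :=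
    le_uSL_add hu hτ.1 (fun p hp q hq => by linarith [(hdis hp hq).1]) hp hq
  rw [abs_le]
  constructor <;> linarith [uSL_le hd p.1 q.1, (hdis hp hq).2]

end Distortion

lemma ghDist_nonneg (dX : X → X → ℝ) (dY : Y → Y → ℝ) : 0 ≤ ghDist dX dY :=
  mul_nonneg (by norm_num) (Real.sInf_nonneg fun _ ⟨_, _, hr⟩ => hr ▸ corrDist_nonneg)

lemma ghDist_uSL_le [Finite X] [Finite Y] {d : X → X → ℝ} {u : Y → Y → ℝ} (hd : IsMetric d)
    (hu : ∀ a b c, u a c ≤ max (u a b) (u b c)) : ghDist (uSL d) u ≤ ghDist d u := by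
  refine mul_le_mul_of_nonneg_left ?_ (by norm_num)
  change sInf ((corrDist (uSL d) u) '' {τ | IsCorr τ}) ≤ sInf ((corrDist d u) '' {τ | IsCorr τ})
  -- `ciInf_mono` needs no correspondence to exist: otherwise both sides are `sInf ∅ = 0`.
  rw [sInf_image', sInf_image']
  exact ciInf_mono ⟨0, by rintro _ ⟨_, rfl⟩; exact corrDist_nonneg⟩
    fun τ => corrDist_uSL_le hd hu τ.2

/-- single linkage is semi-stable in the Gromov–Hausdorff sense: if a
sequence of finite metric spaces converges (in `d_GH`) to a finite ultrametric space
`(U,u)`, then the sequence of their single-linkage ultrametric spaces converges to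
`(U,u)` as well. -/
theorem stmt5 (Xk : ℕ → FinMetricSpace) (U : FinMetricSpace) (hU : IsUltrametricD U.d)
    (h : Filter.Tendsto (fun k => ghDist (Xk k).d U.d) Filter.atTop (nhds 0)) :
    Filter.Tendsto (fun k => ghDist (uSL (Xk k).d) U.d) Filter.atTop (nhds 0) :=
  tendsto_of_tendsto_of_tendsto_of_le_of_le tendsto_const_nhds h
    (fun _ => ghDist_nonneg _ _) fun k => ghDist_uSL_le (Xk k).metric hU.2
end

section
/- Complete linkage and average linkage hierarchical clustering are not stable in the Gromov–Hausdorff sense: for every δ > 0 there exist finite metric spaces X and Y with d_GH(X,Y) ≤ δ such that d_GH(𝔗^CL_U(X), 𝔗^CL_U(Y)) ≥ 1/2 and d_GH(𝔗^AL_U(X), 𝔗^AL_U(Y)) ≥ 1/4. Concretely, one may take X = I(1,1) and Y = I(1,1+δ): then 𝔗^CL_U(X) = 𝔗^AL_U(X) is the three-point ultrametric space with all distances 1, 𝔗^CL_U(Y) is the three-point ultrametric space with distances 1, 2+δ, 2+δ, and 𝔗^AL_U(Y) is the three-point ultrametric space with distances 1, (3+2δ)/2, (3+2δ)/2. -/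
open Classical in
/-- The block (equivalence class) of `x` under the relation `e`. -/
noncomputable def cls {X : Type*} [Fintype X] (e : X → X → Prop) (x : X) : Finset X :=
  Finset.univ.filter fun y => e x y

/-- The minimal linkage value `R_i = min{ℓ(B,B') : B ≠ B' ∈ Θ_i}` over pairs of
distinct blocks of the partition given by the relation `e`. -/
noncomputable def nextR {X : Type*} [Fintype X] (ℓ : Finset X → Finset X → ℝ)
    (e : X → X → Prop) : ℝ :=
  sInf { r | ∃ x y : X, ¬ e x y ∧ ℓ (cls e x) (cls e y) = r }

/-- Merge the blocks of `e` along the equivalence relation generated by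
`ℓ(B,B') ≤ R` on blocks. -/
def mergeRel {X : Type*} [Fintype X] (ℓ : Finset X → Finset X → ℝ)
    (e : X → X → Prop) (R : ℝ) : X → X → Prop :=
  Relation.EqvGen fun a b => e a b ∨ ℓ (cls e a) (cls e b) ≤ R

open Classical in
/-- One step of the standard linkage-based recursion; the state is the pair
(current partition, given as a relation; current merging scale).  Once the partition
is the one-block partition the state is frozen. -/
noncomputable def stdStep {X : Type*} [Fintype X] (ℓ : Finset X → Finset X → ℝ) :
    (X → X → Prop) × ℝ → (X → X → Prop) × ℝ :=
  fun s => if ∀ x y, s.1 x y then s else (mergeRel ℓ s.1 (nextR ℓ s.1), nextR ℓ s.1)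

/-- The sequence of states `(Θ_{i+1}, R_i)` of the standard linkage-based recursion
`𝔗(ℓ,∅)`, starting with the partition into singletons at scale `R₀ = 0`. -/
noncomputable def stdState {X : Type*} [Fintype X] (ℓ : Finset X → Finset X → ℝ) :
    ℕ → (X → X → Prop) × ℝ
  | 0 => (Eq, 0)
  | i + 1 => stdStep ℓ (stdState ℓ i)

/-- The dendrogram of the standard linkage-based method: `x ∼ y` at scale `r` iff
they lie in a common block of `θ(r) = Θ_{max{i : R_i ≤ r}}` (for the nested partitions
`Θ_i` this is equivalent to lying in a common block of some `Θ_i` with `R_i ≤ r`). -/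
def dendroRel {X : Type*} [Fintype X] (ℓ : Finset X → Finset X → ℝ) (r : ℝ)
    (x y : X) : Prop :=
  ∃ i, (stdState ℓ i).2 ≤ r ∧ (stdState ℓ i).1 x y

/-- The output ultrametric of the standard linkage-based method `𝔗(ℓ,∅)`:
`u(x,y)` is the least scale `r ≥ 0` at which `x` and `y` lie in a common block of
the dendrogram. -/
noncomputable def stdUltra {X : Type*} [Fintype X] (ℓ : Finset X → Finset X → ℝ)
    (x y : X) : ℝ :=
  sInf { r | 0 ≤ r ∧ dendroRel ℓ r x y }

/-! For `X = I(1,1)` the three singletons are linked at scale `1` by the chain `0 — 1 — 2`, so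
both methods merge all of `X` at once.  In `Y = I(1,1+δ)` only `{0,1}` merges at scale `1`,
and `2+δ` joins it at the linkage value of `{0,1}` and `{2+δ}`: `2+δ` for complete and
`(3+2δ)/2` for average linkage.  The identity correspondence between `X` and `Y` has
distortion `δ`, while any correspondence between the outputs pairs `0` and `2+δ` with two
points at output distance at most `1`. -/

section GromovHausdorff

variable {X Y : Type*} {dX : X → X → ℝ} {dY : Y → Y → ℝ}

lemma isCorr_univ [Nonempty X] [Nonempty Y] : IsCorr (Set.univ : Set (X × Y)) :=
  ⟨fun _ => ⟨Classical.arbitrary Y, trivial⟩, fun _ => ⟨Classical.arbitrary X, trivial⟩⟩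

lemma isCorr_diagonal : IsCorr (Set.diagonal X) :=
  ⟨fun x => ⟨x, rfl⟩, fun x => ⟨x, rfl⟩⟩

lemma corrDist_le {τ : Set (X × Y)} {c : ℝ} (hc : 0 ≤ c)
    (h : ∀ p ∈ τ, ∀ q ∈ τ, |dX p.1 q.1 - dY p.2 q.2| ≤ c) : corrDist dX dY τ ≤ c :=
  Real.sSup_le (by rintro _ ⟨p, hp, q, hq, rfl⟩; exact h p hp q hq) hc

lemma le_corrDist [Finite X] [Finite Y] {τ : Set (X × Y)} {p q : X × Y} (hp : p ∈ τ)
    (hq : q ∈ τ) : |dX p.1 q.1 - dY p.2 q.2| ≤ corrDist dX dY τ := by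
  refine le_csSup (Set.Finite.bddAbove ?_) ⟨p, hp, q, hq, rfl⟩
  refine (Set.finite_range fun pq : (X × Y) × (X × Y) =>
    |dX pq.1.1 pq.2.1 - dY pq.1.2 pq.2.2|).subset ?_
  rintro _ ⟨p, -, q, -, rfl⟩
  exact ⟨(p, q), rfl⟩

lemma corrDist_nonneg_s17 (τ : Set (X × Y)) : 0 ≤ corrDist dX dY τ :=
  Real.sSup_nonneg (by rintro _ ⟨p, -, q, -, rfl⟩; exact abs_nonneg _)

lemma ghDist_le_of_isCorr {τ : Set (X × Y)} (hτ : IsCorr τ) :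
    ghDist dX dY ≤ corrDist dX dY τ / 2 := by
  have : sInf {r | ∃ τ : Set (X × Y), IsCorr τ ∧ corrDist dX dY τ = r} ≤ corrDist dX dY τ :=
    csInf_le ⟨0, by rintro _ ⟨τ', -, rfl⟩; exact corrDist_nonneg_s17 τ'⟩ ⟨τ, hτ, rfl⟩
  rw [ghDist]
  linarith

lemma ghDist_le_of_forall_abs_sub_le {dX' : X → X → ℝ} {c : ℝ} (hc : 0 ≤ c)
    (h : ∀ x x', |dX x x' - dX' x x'| ≤ c) : ghDist dX dX' ≤ c / 2 := by
  refine (ghDist_le_of_isCorr isCorr_diagonal).trans (div_le_div_of_nonneg_right ?_ two_pos.le)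
  refine corrDist_le hc ?_
  rintro p (hp : p.1 = p.2) q (hq : q.1 = q.2)
  rw [hp, hq]
  exact h _ _

lemma le_ghDist_of_forall_le [Finite X] [Finite Y] [Nonempty X] {a : ℝ}
    (hX : ∀ x x', dX x x' ≤ a) (y y' : Y) : (dY y y' - a) / 2 ≤ ghDist dX dY := by
  have : Nonempty Y := ⟨y⟩
  have : dY y y' - a ≤ sInf {r | ∃ τ : Set (X × Y), IsCorr τ ∧ corrDist dX dY τ = r} := by
    refine le_csInf ⟨_, Set.univ, isCorr_univ, rfl⟩ ?_
    rintro _ ⟨τ, hτ, rfl⟩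
    obtain ⟨x, hx⟩ := hτ.2 y
    obtain ⟨x', hx'⟩ := hτ.2 y'
    calc dY y y' - a ≤ |dX x x' - dY y y'| := by
          rw [abs_sub_comm]; linarith [hX x x', le_abs_self (dY y y' - dX x x')]
      _ ≤ corrDist dX dY τ := le_corrDist hx hx'
  rw [ghDist]
  linarith

end GromovHausdorff

lemma abs_abs_sub_sub_abs_sub_le {ι : Type*} {f g : ι → ℝ} {δ : ℝ}
    (h : ∀ k, 0 ≤ g k - f k ∧ g k - f k ≤ δ) (i j : ι) :
    |(|f i - f j| - |g i - g j|)| ≤ δ := by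
  refine (abs_abs_sub_abs_le_abs_sub _ _).trans (abs_le.2 ⟨?_, ?_⟩) <;>
    linarith [h i, h j]

section Linkage

variable {X : Type*} (d : X → X → ℝ)

lemma ellCL_singleton (x y : X) : ellCL d {x} {y} = d x y := by
  have : {r | ∃ a ∈ ({x} : Finset X), ∃ b ∈ ({y} : Finset X), d a b = r} = {d x y} := by
    ext r; simp [eq_comm]
  rw [ellCL, this, csSup_singleton]

lemma ellAL_singleton (x y : X) : ellAL d {x} {y} = d x y := by
  simp [ellAL]

lemma ellCL_pair_singleton [DecidableEq X] (a b c : X) :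
    ellCL d {a, b} {c} = max (d a c) (d b c) := by
  have : {r | ∃ x ∈ ({a, b} : Finset X), ∃ z ∈ ({c} : Finset X), d x z = r}
      = {d a c, d b c} := by
    ext r; simp [eq_comm]
  rw [ellCL, this, csSup_pair]

lemma ellAL_pair_singleton [DecidableEq X] {a b : X} (hab : a ≠ b) (c : X) :
    ellAL d {a, b} {c} = (d a c + d b c) / 2 := by
  simp [ellAL, Finset.sum_pair hab, Finset.card_pair hab]

variable {d}

lemma ellCL_comm (hd : ∀ x y, d x y = d y x) (A B : Finset X) : ellCL d A B = ellCL d B A := by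
  unfold ellCL
  congr 1
  ext r
  constructor <;> rintro ⟨a, ha, b, hb, rfl⟩ <;> exact ⟨b, hb, a, ha, hd _ _⟩

lemma ellAL_comm (hd : ∀ x y, d x y = d y x) (A B : Finset X) : ellAL d A B = ellAL d B A := by
  unfold ellAL
  rw [Finset.sum_comm, mul_comm]
  simp only [hd]

end Linkage

section LinkageRun

variable {X : Type*} [Fintype X] (ℓ : Finset X → Finset X → ℝ)

lemma cls_eq_singleton (x : X) : cls (@Eq X) x = {x} := by
  ext y; simp [cls, eq_comm]

lemma stdState_succ_of_not_full {i : ℕ} (h : ¬ ∀ x y, (stdState ℓ i).1 x y) :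
    stdState ℓ (i + 1) =
      (mergeRel ℓ (stdState ℓ i).1 (nextR ℓ (stdState ℓ i).1), nextR ℓ (stdState ℓ i).1) := by
  simp only [stdState, stdStep, if_neg h]

lemma stdState_one [Nontrivial X] :
    stdState ℓ 1 = (mergeRel ℓ Eq (nextR ℓ Eq), nextR ℓ Eq) := by
  obtain ⟨x, y, hxy⟩ := exists_pair_ne X
  exact stdState_succ_of_not_full ℓ (i := 0) fun h => hxy (h x y)

lemma stdState_eq_of_full {i j : ℕ} (h : ∀ x y, (stdState ℓ i).1 x y) (hij : i ≤ j) :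
    stdState ℓ j = stdState ℓ i := by
  induction j, hij using Nat.le_induction with
  | base => rfl
  | succ j _ ih =>
    show stdStep ℓ (stdState ℓ j) = _
    rw [ih, stdStep, if_pos h]

lemma stdUltra_eq_of_dendroRel {x y : X} {a : ℝ} (ha : 0 ≤ a) (hxy : dendroRel ℓ a x y)
    (hmin : ∀ i, (stdState ℓ i).1 x y → a ≤ (stdState ℓ i).2) : stdUltra ℓ x y = a := by
  refine IsLeast.csInf_eq ⟨⟨ha, hxy⟩, ?_⟩
  rintro r ⟨-, i, hi, hrel⟩
  exact (hmin i hrel).trans hi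

lemma stdUltra_self (x : X) : stdUltra ℓ x x = 0 :=
  IsLeast.csInf_eq ⟨⟨le_rfl, 0, le_rfl, rfl⟩, fun _ hr => hr.1⟩

lemma stdUltra_le {a : ℝ} (ha : 0 ≤ a) (h : ∀ x y, x ≠ y → stdUltra ℓ x y = a) (x y : X) :
    stdUltra ℓ x y ≤ a := by
  rcases eq_or_ne x y with rfl | hxy
  · rw [stdUltra_self]; exact ha
  · rw [h x y hxy]

variable {ℓ}

lemma stdUltra_eq_of_merge_once [Nontrivial X] {R : ℝ} (hR : nextR ℓ Eq = R) (hR0 : 0 ≤ R)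
    (hfull : ∀ x y, mergeRel ℓ Eq R x y) {x y : X} (hxy : x ≠ y) : stdUltra ℓ x y = R := by
  have h1 : stdState ℓ 1 = (mergeRel ℓ Eq R, R) := by rw [stdState_one, hR]
  refine stdUltra_eq_of_dendroRel ℓ hR0 ⟨1, by rw [h1], by rw [h1]; exact hfull x y⟩ ?_
  rintro (_ | i) hi
  · exact absurd hi hxy
  · rw [stdState_eq_of_full ℓ (h1 ▸ hfull) (Nat.le_add_left 1 i), h1]

lemma stdUltra_eq_of_merge_twice [Nontrivial X] {R₁ R₂ : ℝ} (hR₁ : nextR ℓ Eq = R₁)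
    (hR₂ : nextR ℓ (mergeRel ℓ Eq R₁) = R₂) (h0 : 0 ≤ R₁) (h12 : R₁ ≤ R₂)
    (hpart : ¬ ∀ x y, mergeRel ℓ Eq R₁ x y)
    (hfull : ∀ x y, mergeRel ℓ (mergeRel ℓ Eq R₁) R₂ x y) :
    (∀ x y, x ≠ y → mergeRel ℓ Eq R₁ x y → stdUltra ℓ x y = R₁) ∧
      (∀ x y, ¬ mergeRel ℓ Eq R₁ x y → stdUltra ℓ x y = R₂) := by
  have h1 : stdState ℓ 1 = (mergeRel ℓ Eq R₁, R₁) := by rw [stdState_one, hR₁]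
  have h2 : stdState ℓ 2 = (mergeRel ℓ (mergeRel ℓ Eq R₁) R₂, R₂) := by
    rw [stdState_succ_of_not_full ℓ (h1 ▸ hpart), h1, hR₂]
  have hlate : ∀ i, stdState ℓ (i + 2) = (mergeRel ℓ (mergeRel ℓ Eq R₁) R₂, R₂) := fun i => by
    rw [stdState_eq_of_full ℓ (h2 ▸ hfull) (Nat.le_add_left 2 i), h2]
  constructor
  · intro x y hxy hrel
    refine stdUltra_eq_of_dendroRel ℓ h0 ⟨1, by rw [h1], by rw [h1]; exact hrel⟩ ?_
    rintro (_ | _ | i) hi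
    · exact absurd hi hxy
    · rw [h1]
    · rw [hlate]; exact h12
  · intro x y hrel
    refine stdUltra_eq_of_dendroRel ℓ (h0.trans h12)
      ⟨2, by rw [h2], by rw [h2]; exact hfull x y⟩ ?_
    rintro (_ | _ | i) hi
    · exact absurd (hi ▸ Relation.EqvGen.refl x) hrel
    · rw [h1] at hi; exact absurd hi hrel
    · rw [hlate]

end LinkageRun

section ThreePoints

variable {ℓ : Finset (Fin 3) → Finset (Fin 3) → ℝ}

lemma eqvGen_fin3 {r : Fin 3 → Fin 3 → Prop} (h01 : Relation.EqvGen r 0 1)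
    (h12 : Relation.EqvGen r 1 2) (x y : Fin 3) : Relation.EqvGen r x y := by
  have hub : ∀ x, Relation.EqvGen r x 1 := by
    intro x
    fin_cases x
    exacts [h01, .refl _, .symm _ _ h12]
  exact .trans _ _ _ (hub x) (.symm _ _ (hub y))

lemma nextR_eq_fin3 (hℓ : ∀ A B, ℓ A B = ℓ B A) {a : ℝ} (h01 : ℓ {0} {1} = a)
    (h02 : a ≤ ℓ {0} {2}) (h12 : a ≤ ℓ {1} {2}) : nextR ℓ Eq = a := by
  refine IsLeast.csInf_eq ⟨⟨0, 1, by decide, by rw [cls_eq_singleton, cls_eq_singleton, h01]⟩, ?_⟩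
  rintro _ ⟨x, y, hxy, rfl⟩
  rw [cls_eq_singleton, cls_eq_singleton]
  fin_cases x <;> fin_cases y <;>
    simp only [Fin.isValue, Fin.reduceFinMk, hℓ {1} {0}, hℓ {2} {0}, hℓ {2} {1}] at hxy ⊢ <;>
    first | exact absurd trivial hxy | linarith

lemma stdUltra_fin3_of_chain (hℓ : ∀ A B, ℓ A B = ℓ B A) {a : ℝ} (ha : 0 ≤ a)
    (h01 : ℓ {0} {1} = a) (h12 : ℓ {1} {2} = a) (h02 : a ≤ ℓ {0} {2}) {x y : Fin 3}
    (hxy : x ≠ y) : stdUltra ℓ x y = a := by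
  refine stdUltra_eq_of_merge_once (nextR_eq_fin3 hℓ h01 h02 h12.ge) ha
    (eqvGen_fin3 ?_ ?_) hxy <;> refine .rel _ _ (Or.inr ?_)
  · rw [cls_eq_singleton, cls_eq_singleton, h01]
  · rw [cls_eq_singleton, cls_eq_singleton, h12]

lemma mergeRel_fin3_iff (hℓ : ∀ A B, ℓ A B = ℓ B A) {a : ℝ} (h01 : ℓ {0} {1} = a)
    (h02 : a < ℓ {0} {2}) (h12 : a < ℓ {1} {2}) (x y : Fin 3) :
    mergeRel ℓ Eq a x y ↔ (x = 2 ↔ y = 2) := by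
  constructor
  · have hequiv : Equivalence fun u v : Fin 3 => u = 2 ↔ v = 2 :=
      ⟨fun _ => Iff.rfl, Iff.symm, Iff.trans⟩
    refine fun h => hequiv.eqvGen_iff.mp (Relation.EqvGen.mono ?_ x y h)
    rintro u v (rfl | huv)
    · exact Iff.rfl
    rw [cls_eq_singleton, cls_eq_singleton] at huv
    fin_cases u <;> fin_cases v <;>
      simp only [Fin.isValue, Fin.reduceFinMk, hℓ {2} {0}, hℓ {2} {1}] at huv <;>
      first | decide | linarith
  · intro h
    fin_cases x <;> fin_cases y <;> simp only [Fin.isValue, Fin.reduceFinMk] at h ⊢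
    all_goals first
      | exact absurd h (by decide)
      | exact .refl _
      | exact .rel _ _ (Or.inr (by rw [cls_eq_singleton, cls_eq_singleton, h01]))
      | exact .rel _ _ (Or.inr (by rw [cls_eq_singleton, cls_eq_singleton, hℓ, h01]))

lemma stdUltra_fin3_of_closest_pair (hℓ : ∀ A B, ℓ A B = ℓ B A) {a R : ℝ} (ha : 0 ≤ a)
    (h01 : ℓ {0} {1} = a) (h02 : a < ℓ {0} {2}) (h12 : a < ℓ {1} {2})
    (hR : ℓ {0, 1} {2} = R) (haR : a ≤ R) :
    stdUltra ℓ 0 1 = a ∧ stdUltra ℓ 0 2 = R ∧ stdUltra ℓ 1 2 = R := by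
  have he := mergeRel_fin3_iff hℓ h01 h02 h12
  have hcls : ∀ x, cls (mergeRel ℓ Eq a) x = if x = 2 then {2} else {0, 1} := by
    intro x
    ext y
    simp only [cls, Finset.mem_filter, Finset.mem_univ, true_and, he]
    fin_cases x <;> fin_cases y <;> decide
  have hR₂ : nextR ℓ (mergeRel ℓ Eq a) = R := by
    refine IsLeast.csInf_eq ⟨⟨0, 2, by rw [he]; decide, by rw [hcls, hcls]; exact hR⟩, ?_⟩
    rintro _ ⟨x, y, hxy, rfl⟩
    rw [he] at hxy
    rw [hcls, hcls]
    fin_cases x <;> fin_cases y <;> simp at hxy ⊢ <;> simp [hℓ {2}, hR]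
  have h01' : mergeRel ℓ Eq a 0 1 := (he 0 1).2 (by decide)
  have hfull : ∀ x y, mergeRel ℓ (mergeRel ℓ Eq a) R x y := by
    refine eqvGen_fin3 (.rel _ _ (Or.inl h01')) (.rel _ _ (Or.inr ?_))
    rw [hcls, hcls]
    simpa using hR.le
  obtain ⟨hnear, hfar⟩ := stdUltra_eq_of_merge_twice (nextR_eq_fin3 hℓ h01 h02.le h12.le) hR₂ ha
    haR (fun h => absurd ((he 0 2).1 (h 0 2)) (by decide)) hfull
  exact ⟨hnear 0 1 (by decide) h01', hfar 0 2 (by rw [he]; decide),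
    hfar 1 2 (by rw [he]; decide)⟩

end ThreePoints

lemma symm_of_forall_eq_abs_sub {ι : Type*} {d : ι → ι → ℝ} {p : ι → ℝ}
    (hd : ∀ i j, d i j = |p i - p j|) (i j : ι) : d i j = d j i := by
  rw [hd, hd, abs_sub_comm]

section Intervals

variable {d : Fin 3 → Fin 3 → ℝ}

lemma stdUltra_I_one_one (hd : ∀ i j, d i j = |(![0, 1, 2] : Fin 3 → ℝ) i - ![0, 1, 2] j|)
    {x y : Fin 3} (hxy : x ≠ y) : stdUltra (ellCL d) x y = 1 ∧ stdUltra (ellAL d) x y = 1 := by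
  have h01 : d 0 1 = 1 := by rw [hd]; show |(0 : ℝ) - 1| = 1; norm_num
  have h02 : d 0 2 = 2 := by rw [hd]; show |(0 : ℝ) - 2| = 2; norm_num
  have h12 : d 1 2 = 1 := by rw [hd]; show |(1 : ℝ) - 2| = 1; norm_num
  have hsymm := symm_of_forall_eq_abs_sub hd
  exact ⟨stdUltra_fin3_of_chain (ellCL_comm hsymm) zero_le_one (by rw [ellCL_singleton, h01])
      (by rw [ellCL_singleton, h12]) (by rw [ellCL_singleton, h02]; norm_num) hxy,
    stdUltra_fin3_of_chain (ellAL_comm hsymm) zero_le_one (by rw [ellAL_singleton, h01])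
      (by rw [ellAL_singleton, h12]) (by rw [ellAL_singleton, h02]; norm_num) hxy⟩

lemma stdUltra_I_one_one_add {δ : ℝ} (hδ : 0 < δ)
    (hd : ∀ i j, d i j = |(![0, 1, 2 + δ] : Fin 3 → ℝ) i - ![0, 1, 2 + δ] j|) :
    (stdUltra (ellCL d) 0 1 = 1 ∧ stdUltra (ellCL d) 0 2 = 2 + δ ∧
      stdUltra (ellCL d) 1 2 = 2 + δ) ∧
    (stdUltra (ellAL d) 0 1 = 1 ∧ stdUltra (ellAL d) 0 2 = (3 + 2 * δ) / 2 ∧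
      stdUltra (ellAL d) 1 2 = (3 + 2 * δ) / 2) := by
  have h01 : d 0 1 = 1 := by rw [hd]; show |(0 : ℝ) - 1| = 1; norm_num
  have h02 : d 0 2 = 2 + δ := by
    rw [hd]; show |0 - (2 + δ)| = 2 + δ; rw [abs_sub_comm, sub_zero, abs_of_pos (by linarith)]
  have h12 : d 1 2 = 1 + δ := by
    rw [hd]; show |1 - (2 + δ)| = 1 + δ; rw [abs_sub_comm, abs_of_pos (by linarith)]; ring
  have hsymm := symm_of_forall_eq_abs_sub hd
  exact ⟨stdUltra_fin3_of_closest_pair (ellCL_comm hsymm) zero_le_one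
      (by rw [ellCL_singleton, h01]) (by rw [ellCL_singleton, h02]; linarith)
      (by rw [ellCL_singleton, h12]; linarith)
      (by rw [ellCL_pair_singleton, h02, h12, max_eq_left (by linarith)]) (by linarith),
    stdUltra_fin3_of_closest_pair (ellAL_comm hsymm) zero_le_one
      (by rw [ellAL_singleton, h01]) (by rw [ellAL_singleton, h02]; linarith)
      (by rw [ellAL_singleton, h12]; linarith)
      (by rw [ellAL_pair_singleton _ (by decide), h02, h12]; ring) (by linarith)⟩

end Intervals

/-- complete linkage and average linkage are not stable in the
Gromov–Hausdorff sense: for every `δ > 0`, the spaces `X = I(1,1) = {0,1,2} ⊆ ℝ`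
and `Y = I(1,1+δ) = {0,1,2+δ} ⊆ ℝ` satisfy `d_GH(X,Y) ≤ δ` while the output
ultrametrics of `𝔗^CL` (resp. `𝔗^AL`) are at Gromov–Hausdorff distance at least
`1/2` (resp. `1/4`); the output ultrametrics are the explicit three-point
ultrametric spaces described below. -/
theorem stmt17 (δ : ℝ) (hδ : 0 < δ) (dX dY : Fin 3 → Fin 3 → ℝ)
    (hdX : ∀ i j, dX i j = |(![0, 1, 2] : Fin 3 → ℝ) i - (![0, 1, 2] : Fin 3 → ℝ) j|)
    (hdY : ∀ i j, dY i j =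
      |(![0, 1, 2 + δ] : Fin 3 → ℝ) i - (![0, 1, 2 + δ] : Fin 3 → ℝ) j|) :
    ghDist dX dY ≤ δ ∧
    (1 / 2 : ℝ) ≤ ghDist (stdUltra (ellCL dX)) (stdUltra (ellCL dY)) ∧
    (1 / 4 : ℝ) ≤ ghDist (stdUltra (ellAL dX)) (stdUltra (ellAL dY)) ∧
    (∀ i j, i ≠ j → stdUltra (ellCL dX) i j = 1 ∧ stdUltra (ellAL dX) i j = 1) ∧
    (stdUltra (ellCL dY) 0 1 = 1 ∧ stdUltra (ellCL dY) 0 2 = 2 + δ ∧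
      stdUltra (ellCL dY) 1 2 = 2 + δ) ∧
    (stdUltra (ellAL dY) 0 1 = 1 ∧ stdUltra (ellAL dY) 0 2 = (3 + 2 * δ) / 2 ∧
      stdUltra (ellAL dY) 1 2 = (3 + 2 * δ) / 2) := by
  have uX := fun i j (hij : i ≠ j) => stdUltra_I_one_one hdX hij
  obtain ⟨uCLY, uALY⟩ := stdUltra_I_one_one_add hδ hdY
  refine ⟨?_, ?_, ?_, uX, uCLY, uALY⟩
  · refine (ghDist_le_of_forall_abs_sub_le hδ.le fun i j => ?_).trans (by linarith)
    rw [hdX, hdY]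
    refine abs_abs_sub_sub_abs_sub_le (fun k => ?_) i j
    fin_cases k <;> simp [hδ.le]
  · calc _ ≤ (stdUltra (ellCL dY) 0 2 - 1) / 2 := by rw [uCLY.2.1]; linarith
      _ ≤ _ := le_ghDist_of_forall_le
        (stdUltra_le _ zero_le_one fun i j hij => (uX i j hij).1) 0 2
  · calc _ ≤ (stdUltra (ellAL dY) 0 2 - 1) / 2 := by rw [uALY.2.1]; linarith
      _ ≤ _ := le_ghDist_of_forall_le
        (stdUltra_le _ zero_le_one fun i j hij => (uX i j hij).2) 0 2
end
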